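/- arXiv:1110.2085 — 2 statements merged into one kernel-verified Lean document; each statement's English description precedes it below -/
import Mathlib

section
/- Let V be an n-dimensional real vector space, let X and τ be subspaces of V with X not contained in τ, and let r be an integer with 1 ≤ r ≤ dim X. Then there exists a subspace H of V with dim H = n − r such that H + X = V and H + τ ≠ V. -/
/-!
Pick `x ∈ X \ τ` and a hyperplane `W ⊇ τ` complementary to the line `ℝ ∙ x`. Enlarge that line
to an `r`-dimensional `X' ≤ X`. Since `x ∈ X'`, `W ⊔ X' = V`, so `X'` has a complement `H`
inside `W`; it has dimension `n - r`, spans `V` together with `X`, and `H ⊔ τ ≤ W`.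
-/

open Module Submodule

theorem Submodule.exists_le_le_finrank_eq {K V : Type*} [DivisionRing K] [AddCommGroup V]
    [Module K V] [FiniteDimensional K V] {A B : Submodule K V} (hAB : A ≤ B) {d : ℕ}
    (hAd : finrank K A ≤ d) (hdB : d ≤ finrank K B) :
    ∃ C : Submodule K V, A ≤ C ∧ C ≤ B ∧ finrank K C = d := by
  induction d, hAd using Nat.le_induction with
  | base => exact ⟨A, le_rfl, hAB, rfl⟩
  | succ d _ ih =>
    obtain ⟨C, hAC, hCB, rfl⟩ := ih (by omega)
    have hCB' : C < B := lt_of_le_of_ne hCB (by rintro rfl; omega)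
    obtain ⟨v, hvB, hvC⟩ := SetLike.exists_of_lt hCB'
    exact ⟨C ⊔ K ∙ v, hAC.trans le_sup_left,
      sup_le hCB ((span_singleton_le_iff_mem v B).2 hvB), finrank_sup_span_singleton hvC⟩

/-- Key linear algebra lemma: given subspaces `X ⊄ τ` of an `n`-dimensional real vector
space `V` and `1 ≤ r ≤ dim X`, there is a subspace `H` of dimension `n - r` with
`H + X = V` and `H + τ ≠ V`. -/
theorem exists_complement_subspace (V : Type*) [AddCommGroup V] [Module ℝ V]
    [FiniteDimensional ℝ V] (n : ℕ) (hn : Module.finrank ℝ V = n)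
    (X τ : Submodule ℝ V) (hXτ : ¬ X ≤ τ) (r : ℕ) (hr1 : 1 ≤ r)
    (hr2 : r ≤ Module.finrank ℝ X) :
    ∃ H : Submodule ℝ V, Module.finrank ℝ H = n - r ∧ H ⊔ X = ⊤ ∧ H ⊔ τ ≠ ⊤ := by
  obtain ⟨x, hxX, hxτ⟩ := SetLike.not_le_iff_exists.mp hXτ
  have hx0 : x ≠ 0 := fun h => hxτ (h ▸ τ.zero_mem)
  obtain ⟨W, hτW, hW⟩ := (disjoint_span_singleton_of_notMem hxτ).exists_isCompl
  obtain ⟨X', hxX', hX'X, hX'r⟩ := exists_le_le_finrank_eq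
    ((span_singleton_le_iff_mem x X).2 hxX) (by rwa [finrank_span_singleton hx0]) hr2
  have hWX' : Codisjoint W X' := hW.codisjoint.mono_right hxX'
  obtain ⟨H, hHW, hHX'⟩ := hWX'.exists_isCompl
  refine ⟨H, ?_, top_unique (hHX'.sup_eq_top ▸ sup_le_sup_left hX'X H), ?_⟩
  · have := finrank_add_eq_of_isCompl hHX'
    omega
  · intro hHτ
    have hWtop : W = ⊤ := top_unique (hHτ ▸ sup_le hHW hτW)
    exact hx0 (span_singleton_eq_bot.mp (top_disjoint.mp (hWtop ▸ hW.disjoint)))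
end

section
/- Let s ≤ n and let S = ℝ^s × {0} ⊂ ℝ^n. Let f : ℝ^m → ℝ^n be a C¹ map and K ⊂ ℝ^m a compact set such that f is transverse to S at every point of K. Then there exists ε > 0 such that every C¹ map g : ℝ^m → ℝ^n with sup_{x∈K} (‖g(x) − f(x)‖ + ‖Dg_x − Df_x‖) < ε is transverse to S at every point of K. -/
/-! Transversality of `g` at `x` depends only on the 1-jet `(g x, Dg x)`, and the transverse 1-jets
`{(v, A) | π v ≠ 0 ∨ π ∘ A surjective}` form an open set, since surjective operators onto a
finite-dimensional space form an open set. The 1-jets of `f` over `K` are a compact subset of it,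
so a uniform thickening of them still consists of transverse jets. -/

/-- The projection of `ℝⁿ` onto the last `n - s` coordinates. -/
noncomputable def lastCoordsProj (s n : ℕ) (h : s ≤ n) :
    EuclideanSpace ℝ (Fin n) →L[ℝ] EuclideanSpace ℝ (Fin (n - s)) :=
  LinearMap.toContinuousLinearMap
    { toFun := fun u => WithLp.toLp 2 (fun (j : Fin (n - s)) => u ⟨s + (j : ℕ), by omega⟩)
      map_add' := fun u v => by first | rfl | (ext j; simp)
      map_smul' := fun c u => by first | rfl | (ext j; simp) }

/-- Transversality of a map to `S = ℝˢ × {0} ⊂ ℝⁿ` at `x`: either `g x ∉ S`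
(i.e. `π (g x) ≠ 0`) or `D(π ∘ g)ₓ` is surjective, where `π` is the projection
onto the last `n - s` coordinates. -/
def TransverseToSlice {m n : ℕ} (s : ℕ) (hs : s ≤ n)
    (g : EuclideanSpace ℝ (Fin m) → EuclideanSpace ℝ (Fin n))
    (x : EuclideanSpace ℝ (Fin m)) : Prop :=
  lastCoordsProj s n hs (g x) ≠ 0 ∨
    Function.Surjective (fderiv ℝ (fun z => lastCoordsProj s n hs (g z)) x)

open Function Metric

section Surjective

variable {𝕜 E F : Type*} [NontriviallyNormedField 𝕜] [CompleteSpace 𝕜]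
  [NormedAddCommGroup E] [NormedSpace 𝕜 E] [NormedAddCommGroup F] [NormedSpace 𝕜 F]
  [FiniteDimensional 𝕜 F]

theorem ContinuousLinearMap.isOpen_setOf_surjective :
    IsOpen {A : E →L[𝕜] F | Surjective A} := by
  have := FiniteDimensional.complete 𝕜 F
  refine isOpen_iff_mem_nhds.2 fun A (hA : Surjective A) => ?_
  obtain ⟨R, hAR⟩ := A.exists_rightInverse_of_surjective (LinearMap.range_eq_top.2 hA)
  -- `B ↦ B ∘ R` sends `A` to the identity, so nearby `B` have `B ∘ R` invertible.
  have hcont : Continuous fun B : E →L[𝕜] F => B.comp R :=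
    (ContinuousLinearMap.compL 𝕜 F E F).flip R |>.continuous
  have hunit : {B : E →L[𝕜] F | IsUnit (B.comp R)} ∈ nhds A :=
    hcont.continuousAt.preimage_mem_nhds <|
      Units.isOpen.mem_nhds (show IsUnit (A.comp R) from hAR ▸ isUnit_one)
  filter_upwards [hunit] with B ⟨u, hu⟩ y
  refine ⟨R ((↑u⁻¹ : F →L[𝕜] F) y), ?_⟩
  calc B (R ((↑u⁻¹ : F →L[𝕜] F) y)) = (↑u * ↑u⁻¹ : F →L[𝕜] F) y := by rw [hu]; rfl
    _ = y := by rw [u.mul_inv]; rfl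

theorem isOpen_setOf_ne_zero_or_surjective_comp {G : Type*} [NormedAddCommGroup G]
    [NormedSpace 𝕜 G] (π : G →L[𝕜] F) :
    IsOpen {p : G × (E →L[𝕜] G) | π p.1 ≠ 0 ∨ Surjective (π.comp p.2)} :=
  (isOpen_ne_fun (π.continuous.comp continuous_fst) continuous_const).union <|
    ContinuousLinearMap.isOpen_setOf_surjective.preimage <|
      ((ContinuousLinearMap.compL 𝕜 E G F) π).continuous.comp continuous_snd

end Surjective

theorem transverseToSlice_iff {m n s : ℕ} (hs : s ≤ n)
    {g : EuclideanSpace ℝ (Fin m) → EuclideanSpace ℝ (Fin n)} {x : EuclideanSpace ℝ (Fin m)}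
    (hg : DifferentiableAt ℝ g x) :
    TransverseToSlice s hs g x ↔
      lastCoordsProj s n hs (g x) ≠ 0 ∨
        Surjective ((lastCoordsProj s n hs).comp (fderiv ℝ g x)) := by
  have hD : fderiv ℝ (fun z => lastCoordsProj s n hs (g z)) x =
      (lastCoordsProj s n hs).comp (fderiv ℝ g x) :=
    ((lastCoordsProj s n hs).hasFDerivAt.comp x hg.hasFDerivAt).fderiv
  rw [TransverseToSlice, hD]

/-- Transversality to the linear slice `ℝˢ × {0}` on a compact set is stable under
`C¹`-small perturbations. -/
theorem transverse_open_on_compact {m n s : ℕ} (hs : s ≤ n)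
    (f : EuclideanSpace ℝ (Fin m) → EuclideanSpace ℝ (Fin n)) (hf : ContDiff ℝ 1 f)
    (K : Set (EuclideanSpace ℝ (Fin m))) (hK : IsCompact K)
    (htrans : ∀ x ∈ K, TransverseToSlice s hs f x) :
    ∃ ε > 0, ∀ g : EuclideanSpace ℝ (Fin m) → EuclideanSpace ℝ (Fin n),
      ContDiff ℝ 1 g →
      (∀ x ∈ K, ‖g x - f x‖ + ‖fderiv ℝ g x - fderiv ℝ f x‖ < ε) →
      ∀ x ∈ K, TransverseToSlice s hs g x := by
  set W := {p : EuclideanSpace ℝ (Fin n) ×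
      (EuclideanSpace ℝ (Fin m) →L[ℝ] EuclideanSpace ℝ (Fin n)) | lastCoordsProj s n hs p.1 ≠ 0 ∨ Surjective ((lastCoordsProj s n hs).comp p.2)}
  have transverse_iff {g} (hg : ContDiff ℝ 1 g) (x) :
      TransverseToSlice s hs g x ↔ (g x, fderiv ℝ g x) ∈ W :=
    transverseToSlice_iff hs (hg.differentiable one_ne_zero x)
  have hjet : Continuous fun x => (f x, fderiv ℝ f x) :=
    hf.continuous.prodMk (hf.continuous_fderiv one_ne_zero)
  obtain ⟨ε, hε, hεW⟩ := (hK.image hjet).exists_thickening_subset_open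
    (isOpen_setOf_ne_zero_or_surjective_comp _)
    (by rintro _ ⟨x, hx, rfl⟩; exact (transverse_iff hf x).1 (htrans x hx))
  refine ⟨ε, hε, fun g hg hclose x hx => (transverse_iff hg x).2 (hεW ?_)⟩
  refine mem_thickening_iff.2 ⟨_, Set.mem_image_of_mem _ hx, ?_⟩
  calc dist (g x, fderiv ℝ g x) (f x, fderiv ℝ f x)
      ≤ ‖g x - f x‖ + ‖fderiv ℝ g x - fderiv ℝ f x‖ := by
        rw [Prod.dist_eq, dist_eq_norm, dist_eq_norm]
        exact max_le_add_of_nonneg (norm_nonneg _) (norm_nonneg _)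
    _ < ε := hclose x hx
end
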